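/- arXiv:2303.02949 — 2 statements merged into one kernel-verified Lean document; each statement's English description precedes it below -/
import Mathlib

section
/- Let p_i, p_j, p_k ∈ ℝ² and q_i, q_j, q_k ∈ ℝ² with q_i = cR(θ)p_i + ξ and q_j = cR(θ)p_j + ξ for some c ≠ 0, rotation R(θ), and ξ ∈ ℝ². Suppose A_i p_i + A_j p_j + A_k p_k = 0 and A_i q_i + A_j q_j + A_k q_k = 0, where A_i, A_j are scaled rotation matrices (of the form aI₂ + bJ with J the π/2 rotation) and A_k = -sin(α)I₂ with sin α ≠ 0. Then q_k = cR(θ)p_k + ξ. -/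
noncomputable def Rot (θ : ℝ) : Matrix (Fin 2) (Fin 2) ℝ :=
  !![Real.cos θ, -Real.sin θ; Real.sin θ, Real.cos θ]

def Jmat : Matrix (Fin 2) (Fin 2) ℝ := !![0, -1; 1, 0]

/-- A matrix is a scaled rotation matrix if it has the form aI₂ + bJ. -/
def IsScaledRotation (A : Matrix (Fin 2) (Fin 2) ℝ) : Prop :=
  ∃ a b : ℝ, A = a • (1 : Matrix (Fin 2) (Fin 2) ℝ) + b • Jmat

/-! Scaled rotation matrices form a commutative algebra containing `R(θ)`, so they commute with
`S = c R(θ)`; together with `A_i + A_j + A_k = 0` this makes the constraint invariant under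
`v ↦ S v + ξ`. Hence `S p_k + ξ` satisfies the same constraint as `q_k` given `q_i, q_j`, and the
two agree because `A_k = -sin α I₂` is invertible. -/

open Matrix

theorem Rot_eq_cos_smul_one_add_sin_smul_Jmat (θ : ℝ) :
    Rot θ = Real.cos θ • (1 : Matrix (Fin 2) (Fin 2) ℝ) + Real.sin θ • Jmat := by
  ext i j
  fin_cases i <;> fin_cases j <;> simp [Rot, Jmat]

theorem isScaledRotation_rot (θ : ℝ) : IsScaledRotation (Rot θ) :=
  ⟨_, _, Rot_eq_cos_smul_one_add_sin_smul_Jmat θ⟩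

theorem IsScaledRotation.commute {A B : Matrix (Fin 2) (Fin 2) ℝ}
    (hA : IsScaledRotation A) (hB : IsScaledRotation B) : Commute A B := by
  obtain ⟨a, b, rfl⟩ := hA
  obtain ⟨a', b', rfl⟩ := hB
  have h1 : Commute (a • 1 + b • Jmat) 1 := Commute.one_right _
  have hJ : Commute (a • 1 + b • Jmat) Jmat :=
    ((Commute.one_left _).smul_left a).add_left ((Commute.refl _).smul_left b)
  exact (h1.smul_right a').add_right (hJ.smul_right b')

theorem mulVec_add_mulVec_add_mulVec_affine_eq_zero {n R : Type*} [Fintype n] [DecidableEq n]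
    [CommRing R] {Ai Aj Ak M : Matrix n n R} (hi : Commute Ai M) (hj : Commute Aj M)
    (hk : Commute Ak M) (hsum : Ai + Aj + Ak = 0) {pi pj pk : n → R} (ξ : n → R)
    (hp : Ai *ᵥ pi + Aj *ᵥ pj + Ak *ᵥ pk = 0) :
    Ai *ᵥ (M *ᵥ pi + ξ) + Aj *ᵥ (M *ᵥ pj + ξ) + Ak *ᵥ (M *ᵥ pk + ξ) = 0 := by
  have hξ : Ai *ᵥ ξ + Aj *ᵥ ξ + Ak *ᵥ ξ = 0 := by
    rw [← add_mulVec, ← add_mulVec, hsum, zero_mulVec]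
  calc Ai *ᵥ (M *ᵥ pi + ξ) + Aj *ᵥ (M *ᵥ pj + ξ) + Ak *ᵥ (M *ᵥ pk + ξ)
      = M *ᵥ (Ai *ᵥ pi + Aj *ᵥ pj + Ak *ᵥ pk) + (Ai *ᵥ ξ + Aj *ᵥ ξ + Ak *ᵥ ξ) := by
        simp only [mulVec_add, mulVec_mulVec, hi.eq, hj.eq, hk.eq]
        abel
    _ = 0 := by rw [hp, hξ, mulVec_zero, add_zero]

theorem angle_constraint_similarity_step_general
    (pi pj pk qi qj qk ξ : Fin 2 → ℝ)
    (Ai Aj Ak : Matrix (Fin 2) (Fin 2) ℝ) (c θ α : ℝ)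
    (hα : Real.sin α ≠ 0)
    (hAi : IsScaledRotation Ai) (hAj : IsScaledRotation Aj)
    (hAk : Ak = (-Real.sin α) • (1 : Matrix (Fin 2) (Fin 2) ℝ))
    (hsum : Ai + Aj + Ak = 0)
    (hqi : qi = c • (Rot θ).mulVec pi + ξ)
    (hqj : qj = c • (Rot θ).mulVec pj + ξ)
    (hp : Ai.mulVec pi + Aj.mulVec pj + Ak.mulVec pk = 0)
    (hq : Ai.mulVec qi + Aj.mulVec qj + Ak.mulVec qk = 0) :
    qk = c • (Rot θ).mulVec pk + ξ := by
  have hcomm {A : Matrix (Fin 2) (Fin 2) ℝ} (hA : IsScaledRotation A) : Commute A (c • Rot θ) :=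
    (hA.commute (isScaledRotation_rot θ)).smul_right c
  have hAk_comm : Commute Ak (c • Rot θ) := hAk ▸ ((Commute.one_left _).smul_left _)
  have hSp := mulVec_add_mulVec_add_mulVec_affine_eq_zero (hcomm hAi) (hcomm hAj) hAk_comm hsum ξ hp
  simp only [smul_mulVec, ← hqi, ← hqj] at hSp
  have hdiff : Ak *ᵥ (qk - (c • Rot θ *ᵥ pk + ξ)) = 0 := by
    rw [mulVec_sub, sub_eq_zero]
    exact add_left_cancel (hq.trans hSp.symm)
  rw [hAk, smul_mulVec, one_mulVec, smul_eq_zero, neg_eq_zero, sub_eq_zero] at hdiff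
  exact hdiff.resolve_left hα

/-- Induction step of Lemma 1: if two triples satisfy the same angle-induced
linear constraint and two of the points are related by a similarity transform,
then so is the third. -/
theorem angle_constraint_similarity_step
    (pi pj pk qi qj qk ξ : Fin 2 → ℝ)
    (Ai Aj Ak : Matrix (Fin 2) (Fin 2) ℝ) (c θ α : ℝ)
    (hc : c ≠ 0) (hα : Real.sin α ≠ 0)
    (hAi : IsScaledRotation Ai) (hAj : IsScaledRotation Aj)
    (hAk : Ak = (-Real.sin α) • (1 : Matrix (Fin 2) (Fin 2) ℝ))
    (hsum : Ai + Aj + Ak = 0)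
    (hqi : qi = c • (Rot θ).mulVec pi + ξ)
    (hqj : qj = c • (Rot θ).mulVec pj + ξ)
    (hp : Ai.mulVec pi + Aj.mulVec pj + Ak.mulVec pk = 0)
    (hq : Ai.mulVec qi + Aj.mulVec qj + Ak.mulVec qk = 0) :
    qk = c • (Rot θ).mulVec pk + ξ :=
  angle_constraint_similarity_step_general pi pj pk qi qj qk ξ Ai Aj Ak c θ α hα hAi hAj hAk hsum
    hqi hqj hp hq
end

section
/- Let Q ∈ SO(2) and let A be a scaled rotation matrix aI₂ + bJ (J the π/2 rotation). Then for any e ∈ ℝ², Q(Aᵀ(A e)) = Aᵀ(A (Q e)). Consequently the control law u_k = -(A_k)ᵀ(A_i e_ki + A_j e_kj), with A_i, A_j, A_k scaled rotation matrices, satisfies Q u_k = value of the same formula applied to (Q e_ki, Q e_kj); i.e., the controller is independent of the global reference frame. -/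
lemma rot_comm (θ : ℝ) (A : Matrix (Fin 2) (Fin 2) ℝ) (hA : IsScaledRotation A) :
    Rot θ * A = A * Rot θ := by
  obtain ⟨a, b, rfl⟩ := hA
  ext i j
  fin_cases i <;> fin_cases j <;>
    simp [Rot, Jmat, Matrix.mul_apply, Fin.sum_univ_two, Matrix.one_apply] <;> ring

lemma transpose_scaled (A : Matrix (Fin 2) (Fin 2) ℝ) (hA : IsScaledRotation A) :
    IsScaledRotation A.transpose := by
  obtain ⟨a, b, rfl⟩ := hA
  refine ⟨a, -b, ?_⟩
  ext i j
  fin_cases i <;> fin_cases j <;>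
    simp [Jmat, Matrix.one_apply]

lemma key (θ : ℝ) (A : Matrix (Fin 2) (Fin 2) ℝ) (hA : IsScaledRotation A)
    (e : Fin 2 → ℝ) : (Rot θ).mulVec (A.mulVec e) = A.mulVec ((Rot θ).mulVec e) := by
  rw [Matrix.mulVec_mulVec, Matrix.mulVec_mulVec, rot_comm θ A hA]

/-- Lemma 2(2): for Q ∈ SO(2) (i.e. Q = R(θ) for some θ) and a scaled rotation
matrix A, Q commutes through AᵀA; consequently the angle-constrained control
law is independent of the global reference frame. -/
theorem controller_frame_independent
    (Q : Matrix (Fin 2) (Fin 2) ℝ) (hQ : ∃ θ : ℝ, Q = Rot θ)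
    (A Ai Aj Ak : Matrix (Fin 2) (Fin 2) ℝ)
    (hA : IsScaledRotation A) (hAi : IsScaledRotation Ai)
    (hAj : IsScaledRotation Aj) (hAk : IsScaledRotation Ak) :
    (∀ e : Fin 2 → ℝ,
      Q.mulVec (A.transpose.mulVec (A.mulVec e)) =
        A.transpose.mulVec (A.mulVec (Q.mulVec e))) ∧
    (∀ eki ekj : Fin 2 → ℝ,
      Q.mulVec (-(Ak.transpose.mulVec (Ai.mulVec eki + Aj.mulVec ekj))) =
        -(Ak.transpose.mulVec (Ai.mulVec (Q.mulVec eki) + Aj.mulVec (Q.mulVec ekj)))) := by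
  obtain ⟨θ, rfl⟩ := hQ
  constructor
  · intro e
    rw [key θ _ (transpose_scaled A hA), key θ A hA]
  · intro eki ekj
    rw [Matrix.mulVec_neg, Matrix.mulVec_add, Matrix.mulVec_add,
      Matrix.mulVec_add]
    simp only [key θ _ (transpose_scaled Ak hAk), key θ Ai hAi, key θ Aj hAj]
end
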